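/- For every n ∈ ℕ, the matrices U_n satisfy the recursion U_0 = (1) and U_{n+1} = (U_n ⊕ 1)·F_{U_n}, where U_n ⊕ 1 is the block diagonal matrix with blocks U_n and the 1×1 identity, and F_{U_n} is the block matrix with top-left block the (n+1)×(n+1) identity, top-right column equal to −(U_{n+1}^{-1}[i,n+1])_{0≤i≤n} (the last column of the inverse of U_{n+1} without its last entry), bottom-left row zero, and bottom-right entry 1. -/
import Mathlib

set_option maxHeartbeats 1600000


/-- The heights of a `U^m_n`-path of order `n` (the abscissas `x i = m + i` are
determined, so only the heights `y i ∈ {0, …, n}`, encoded as `Fin (n+1)`, are recorded):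
`y (k+1) ∈ {y k, y k + 1}` and a rise step at position `k` forces `y k ≥ k`. -/
def IsUPath (n : ℕ) (y : Fin (n + 1) → Fin (n + 1)) : Prop :=
  ∀ k : Fin n,
    ((y k.succ = y k.castSucc ∨ (y k.succ : ℕ) = (y k.castSucc : ℕ) + 1) ∧
      ((y k.succ : ℕ) = (y k.castSucc : ℕ) + 1 → (k : ℕ) ≤ (y k.castSucc : ℕ)))

/-- The weight of a `U`-type path: a rise step from `(k, j)` to `(k+1, j+1)` has weight
`t (j - k) (j + 1)` and a horizontal step has weight `1`; the weight of the path is the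
product of the weights of its steps. -/
def uweight {R : Type*} [CommRing R] (n : ℕ) (t : ℕ → ℕ → R)
    (y : Fin (n + 1) → Fin (n + 1)) : R :=
  ∏ k : Fin n,
    if (y k.succ : ℕ) = (y k.castSucc : ℕ) + 1
    then t ((y k.castSucc : ℕ) - (k : ℕ)) ((y k.castSucc : ℕ) + 1) else 1

open scoped Classical in
/-- The matrix `U n`: its `(i, j)` entry is the sum of the weights of all `U^0_n`-paths
with `y 0 = i` and `y n = j`. -/
noncomputable def Umat {R : Type*} [CommRing R] (n : ℕ) (t : ℕ → ℕ → R) :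
    Matrix (Fin (n + 1)) (Fin (n + 1)) R :=
  Matrix.of fun i j =>
    ∑ y ∈ Finset.univ.filter
        (fun y : Fin (n + 1) → Fin (n + 1) => IsUPath n y ∧ y 0 = i ∧ y (Fin.last n) = j),
      uweight n t y

lemma isUPath_mono {n : ℕ} {y : Fin (n+1) → Fin (n+1)} (h : IsUPath n y) : Monotone y := by
  rw [Fin.monotone_iff_le_succ]
  intro k
  rcases (h k).1 with h1 | h1
  · exact le_of_eq h1.symm
  · exact le_of_lt (by rw [Fin.lt_iff_val_lt_val]; omega)

lemma isUPath_const {n : ℕ} (i : Fin (n+1)) : IsUPath n (fun _ => i) := by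
  intro k
  exact ⟨Or.inl rfl, fun h => absurd h (by simp)⟩

open scoped Classical in
lemma umat_diag {R : Type*} [CommRing R] (n : ℕ) (t : ℕ → ℕ → R) (i : Fin (n+1)) :
    Umat n t i i = 1 := by
  have hset : (Finset.univ.filter
      (fun y : Fin (n + 1) → Fin (n + 1) => IsUPath n y ∧ y 0 = i ∧ y (Fin.last n) = i))
      = {fun _ => i} := by
    ext y
    simp only [Finset.mem_filter, Finset.mem_univ, true_and, Finset.mem_singleton]
    constructor
    · rintro ⟨hp, h0, hl⟩
      funext k
      have hm := isUPath_mono hp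
      have h1 : y 0 ≤ y k := hm (Fin.zero_le k)
      have h2 : y k ≤ y (Fin.last n) := hm (Fin.le_last k)
      rw [h0] at h1; rw [hl] at h2
      exact le_antisymm h2 h1
    · rintro rfl
      exact ⟨isUPath_const i, rfl, rfl⟩
  rw [Umat, Matrix.of_apply, hset, Finset.sum_singleton, uweight]
  simp

open scoped Classical in
lemma umat_triangular {R : Type*} [CommRing R] (n : ℕ) (t : ℕ → ℕ → R) :
    (Umat n t).BlockTriangular id := by
  intro i j hij
  rw [Umat, Matrix.of_apply]
  apply Finset.sum_eq_zero
  intro y hy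
  rw [Finset.mem_filter] at hy
  obtain ⟨_, hp, h0, hl⟩ := hy
  exfalso
  have := isUPath_mono hp (Fin.zero_le (Fin.last n))
  rw [h0, hl] at this
  exact absurd hij (not_lt.2 this)

lemma umat_det {R : Type*} [CommRing R] (n : ℕ) (t : ℕ → ℕ → R) :
    (Umat n t).det = 1 := by
  rw [Matrix.det_of_upperTriangular (umat_triangular n t)]
  simp [Matrix.diag, umat_diag]

lemma umat_mul_inv {R : Type*} [CommRing R] (n : ℕ) (t : ℕ → ℕ → R) :
    Umat n t * (Umat n t)⁻¹ = 1 :=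
  Matrix.mul_nonsing_inv _ (by rw [umat_det]; exact isUnit_one)

lemma umat_inv_last {R : Type*} [CommRing R] (n : ℕ) (t : ℕ → ℕ → R) :
    (Umat n t)⁻¹ (Fin.last n) (Fin.last n) = 1 := by
  have h := congrFun (congrFun (umat_mul_inv n t) (Fin.last n)) (Fin.last n)
  rw [Matrix.mul_apply, Matrix.one_apply_eq] at h
  rw [Finset.sum_eq_single (Fin.last n)] at h
  · rwa [umat_diag, one_mul] at h
  · intro k _ hk
    exact mul_eq_zero_of_left (umat_triangular n t (lt_of_le_of_ne (Fin.le_last k) hk)) _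
  · simp

/-- Truncation of a path of order `n+1` to order `n`. -/
def pdown (n : ℕ) (y : Fin (n+2) → Fin (n+2)) (k : Fin (n+1)) : Fin (n+1) :=
  ⟨min (y k.castSucc : ℕ) n, Nat.lt_succ_of_le (Nat.min_le_right _ _)⟩

/-- Extension of a path of order `n` to order `n+1` by a final horizontal step. -/
def pup (n : ℕ) (y : Fin (n+1) → Fin (n+1)) (k : Fin (n+2)) : Fin (n+2) :=
  ⟨(y ⟨min (k : ℕ) n, Nat.lt_succ_of_le (Nat.min_le_right _ _)⟩ : ℕ),
    Nat.lt_succ_of_lt (Fin.is_lt _)⟩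

lemma y_congr {m : ℕ} (y : Fin m → Fin m) {a b : Fin m} (h : (a : ℕ) = (b : ℕ)) :
    (y a : ℕ) = (y b : ℕ) := congrArg (fun z => (y z : ℕ)) (Fin.ext h)

lemma big_bound {n : ℕ} {y : Fin (n+2) → Fin (n+2)} (hp : IsUPath (n+1) y)
    {j : Fin (n+1)} (hl : y (Fin.last (n+1)) = j.castSucc) :
    ∀ k : Fin (n+2), (y k : ℕ) ≤ n := by
  intro k
  have h1 := isUPath_mono hp (Fin.le_last k)
  rw [hl] at h1
  have hj := j.is_lt
  rw [Fin.le_def] at h1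
  simp only [Fin.coe_castSucc] at h1
  omega

lemma big_last {n : ℕ} {y : Fin (n+2) → Fin (n+2)} (hp : IsUPath (n+1) y)
    {j : Fin (n+1)} (hl : y (Fin.last (n+1)) = j.castSucc) :
    (y ⟨n, by omega⟩ : ℕ) = (j : ℕ) := by
  obtain ⟨hor, hr⟩ := hp (Fin.last n)
  have hb := big_bound hp hl ⟨n, by omega⟩
  have hlv : (y (Fin.last (n+1)) : ℕ) = (j : ℕ) := by rw [hl]; simp
  have h1 : (y (Fin.last (n+1)) : ℕ) = (y (⟨n, by omega⟩ : Fin (n+2)) : ℕ) ∨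
      (y (Fin.last (n+1)) : ℕ) = (y (⟨n, by omega⟩ : Fin (n+2)) : ℕ) + 1 := by
    rcases hor with h | h
    · exact Or.inl (congrArg Fin.val h)
    · exact Or.inr h
  have h2 : (y (Fin.last (n+1)) : ℕ) = (y (⟨n, by omega⟩ : Fin (n+2)) : ℕ) + 1 →
      n ≤ (y (⟨n, by omega⟩ : Fin (n+2)) : ℕ) := hr
  have hj := j.is_lt
  omega

open scoped Classical in
lemma umat_restrict {R : Type*} [CommRing R] (n : ℕ) (t : ℕ → ℕ → R) (i j : Fin (n+1)) :
    Umat (n+1) t i.castSucc j.castSucc = Umat n t i j := by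
  rw [Umat, Umat, Matrix.of_apply, Matrix.of_apply]
  refine Finset.sum_nbij' (pdown n) (pup n) ?hmem1 ?hmem2 ?hleft ?hright ?hw
  case hmem1 =>
    intro y hy
    rw [Finset.mem_filter] at hy ⊢
    obtain ⟨-, hp, h0, hl⟩ := hy
    have hb := big_bound hp hl
    refine ⟨Finset.mem_univ _, ?_, ?_, ?_⟩
    · intro k
      obtain ⟨hor, hr⟩ := hp k.castSucc
      have e1 : ((pdown n y) k.succ : ℕ) = (y k.castSucc.succ : ℕ) := by
        have h : ((pdown n y) k.succ : ℕ) = min (y k.castSucc.succ : ℕ) n := rfl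
        rw [h]; exact min_eq_left (hb _)
      have e2 : ((pdown n y) k.castSucc : ℕ) = (y k.castSucc.castSucc : ℕ) := by
        have h : ((pdown n y) k.castSucc : ℕ) = min (y k.castSucc.castSucc : ℕ) n := rfl
        rw [h]; exact min_eq_left (hb _)
      refine ⟨?_, ?_⟩
      · rcases hor with h | h
        · exact Or.inl (Fin.ext (by rw [e1, e2]; exact congrArg Fin.val h))
        · exact Or.inr (by rw [e1, e2]; exact h)
      · intro h
        rw [e2]
        rw [e1, e2] at h
        exact hr h
    · apply Fin.ext
      have h : ((pdown n y) 0 : ℕ) = min (y (0 : Fin (n+1)).castSucc : ℕ) n := rfl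
      rw [h, Fin.castSucc_zero, h0]
      have h2 : ((i.castSucc : Fin (n+2)) : ℕ) = (i : ℕ) := rfl
      rw [h2]
      exact min_eq_left (by omega)
    · apply Fin.ext
      have hlast := big_last hp hl
      have h : ((pdown n y) (Fin.last n) : ℕ) = min ((y (⟨n, by omega⟩ : Fin (n+2))) : ℕ) n := rfl
      rw [h, hlast]
      have hj := j.is_lt
      exact min_eq_left (by omega)
  case hmem2 =>
    intro y hy
    rw [Finset.mem_filter] at hy ⊢
    obtain ⟨-, hp, h0, hl⟩ := hy
    refine ⟨Finset.mem_univ _, ?_, ?_, ?_⟩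
    · intro k
      by_cases hk : (k : ℕ) < n
      · have e1 : ((pup n y) k.succ : ℕ) = (y ⟨(k:ℕ)+1, by omega⟩ : ℕ) :=
          y_congr y (by simp only [Fin.val_succ]; omega)
        have e2 : ((pup n y) k.castSucc : ℕ) = (y ⟨(k:ℕ), by omega⟩ : ℕ) :=
          y_congr y (by simp only [Fin.coe_castSucc]; omega)
        have hor' : (y (⟨(k:ℕ)+1, by omega⟩ : Fin (n+1)) : ℕ) = (y (⟨(k:ℕ), by omega⟩ : Fin (n+1)) : ℕ) ∨
            (y (⟨(k:ℕ)+1, by omega⟩ : Fin (n+1)) : ℕ) = (y (⟨(k:ℕ), by omega⟩ : Fin (n+1)) : ℕ) + 1 := by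
          rcases (hp ⟨(k:ℕ), hk⟩).1 with h | h
          · exact Or.inl (congrArg Fin.val h)
          · exact Or.inr h
        have hr' : (y (⟨(k:ℕ)+1, by omega⟩ : Fin (n+1)) : ℕ) = (y (⟨(k:ℕ), by omega⟩ : Fin (n+1)) : ℕ) + 1 →
            (k : ℕ) ≤ (y (⟨(k:ℕ), by omega⟩ : Fin (n+1)) : ℕ) := (hp ⟨(k:ℕ), hk⟩).2
        refine ⟨?_, ?_⟩
        · rcases hor' with h | h
          · exact Or.inl (Fin.ext (by rw [e1, e2, h]))
          · exact Or.inr (by rw [e1, e2]; exact h)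
        · intro h
          rw [e2]
          rw [e1, e2] at h
          exact hr' h
      · have e : ((pup n y) k.succ : ℕ) = ((pup n y) k.castSucc : ℕ) :=
          y_congr y (by simp only [Fin.val_succ, Fin.coe_castSucc]; omega)
        exact ⟨Or.inl (Fin.ext e), fun h => by omega⟩
    · apply Fin.ext
      have e : ((pup n y) 0 : ℕ) = (y 0 : ℕ) := y_congr y (by simp)
      rw [e, h0]
      rfl
    · apply Fin.ext
      have e : ((pup n y) (Fin.last (n+1)) : ℕ) = (y (Fin.last n) : ℕ) :=
        y_congr y (by simp only [Fin.val_last]; omega)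
      rw [e, hl]
      rfl
  case hleft =>
    intro y hy
    rw [Finset.mem_filter] at hy
    obtain ⟨-, hp, h0, hl⟩ := hy
    have hb := big_bound hp hl
    funext k
    apply Fin.ext
    have e : ((pup n (pdown n y)) k : ℕ) =
        min ((y (⟨min (k:ℕ) n, by omega⟩ : Fin (n+2))) : ℕ) n := rfl
    rw [e, min_eq_left (hb _)]
    by_cases hk : (k : ℕ) ≤ n
    · exact y_congr y (show min (k:ℕ) n = (k:ℕ) by omega)
    · have h1 := big_last hp hl
      have h2 : (y k : ℕ) = (j : ℕ) := by
        have hk2 : k = Fin.last (n+1) := Fin.ext (by simp only [Fin.val_last]; omega)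
        rw [hk2, hl]; simp
      have e2 : (y (⟨min (k:ℕ) n, by omega⟩ : Fin (n+2)) : ℕ) =
          (y (⟨n, by omega⟩ : Fin (n+2)) : ℕ) := y_congr y (show min (k:ℕ) n = n by omega)
      rw [e2, h1, h2]
  case hright =>
    intro y _
    funext k
    apply Fin.ext
    have e : ((pdown n (pup n y)) k : ℕ) =
        min ((y (⟨min (k:ℕ) n, by omega⟩ : Fin (n+1))) : ℕ) n := rfl
    rw [e, min_eq_left (Nat.lt_succ_iff.mp (Fin.is_lt _))]
    exact y_congr y (show min (k:ℕ) n = (k:ℕ) by omega)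
  case hw =>
    intro y hy
    rw [Finset.mem_filter] at hy
    obtain ⟨-, hp, h0, hl⟩ := hy
    have hb := big_bound hp hl
    rw [uweight, uweight, Fin.prod_univ_castSucc]
    have ha : (y (Fin.last n).succ : ℕ) = (y (Fin.last (n+1)) : ℕ) := y_congr y (by simp)
    have hb' : (y (Fin.last n).castSucc : ℕ) = (y (⟨n, by omega⟩ : Fin (n+2)) : ℕ) :=
      y_congr y (by simp)
    have h1 := big_last hp hl
    have h2 : (y (Fin.last (n+1)) : ℕ) = (j : ℕ) := by rw [hl]; simp
    have hno : ¬ ((y (Fin.last n).succ : ℕ) = (y (Fin.last n).castSucc : ℕ) + 1) := by omega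
    rw [if_neg hno, mul_one]
    apply Finset.prod_congr rfl
    intro k _
    have e1 : ((pdown n y) k.succ : ℕ) = (y k.castSucc.succ : ℕ) := by
      have h : ((pdown n y) k.succ : ℕ) = min (y k.castSucc.succ : ℕ) n := rfl
      rw [h]; exact min_eq_left (hb _)
    have e2 : ((pdown n y) k.castSucc : ℕ) = (y k.castSucc.castSucc : ℕ) := by
      have h : ((pdown n y) k.castSucc : ℕ) = min (y k.castSucc.castSucc : ℕ) n := rfl
      rw [h]; exact min_eq_left (hb _)
    rw [e1, e2]
    simp


/-- The recursion for the matrices `U n`: `U 0 = (1)` and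
`U (n+1) = (U n ⊕ 1) * F`, where `U n ⊕ 1` is the block diagonal matrix with blocks
`U n` and the `1 × 1` identity, and `F` has top-left block the identity, bottom-left row
zero, bottom-right entry `1`, and top-right column `-(U (n+1))⁻¹ [i, n+1]` for
`0 ≤ i ≤ n` (the last column of the inverse of `U (n+1)` without its last entry).
Blocks over `Fin (n+1) ⊕ Fin 1` are transported to `Fin (n+2)` via `finSumFinEquiv`. -/
theorem stmt12 {R : Type*} [CommRing R] (t : ℕ → ℕ → R) :
    Umat 0 t = 1 ∧
      ∀ n : ℕ,
        Umat (n + 1) t =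
          (Matrix.reindex finSumFinEquiv finSumFinEquiv
              (Matrix.fromBlocks (Umat n t) 0 0 (1 : Matrix (Fin 1) (Fin 1) R))) *
            (Matrix.reindex finSumFinEquiv finSumFinEquiv
              (Matrix.fromBlocks (1 : Matrix (Fin (n + 1)) (Fin (n + 1)) R)
                (Matrix.of fun (i : Fin (n + 1)) (_ : Fin 1) =>
                  -((Umat (n + 1) t)⁻¹ i.castSucc (Fin.last (n + 1))))
                0 (1 : Matrix (Fin 1) (Fin 1) R))) := by
  
  constructor
  · ext i j
    have hij : i = j := Fin.ext (by omega)
    subst hij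
    rw [umat_diag, Matrix.one_apply_eq]
  · intro n
    have hUV := umat_mul_inv (n+1) t
    ext a b
    rw [Matrix.mul_apply]
    set A := Matrix.reindex finSumFinEquiv finSumFinEquiv
        (Matrix.fromBlocks (Umat n t) 0 0 (1 : Matrix (Fin 1) (Fin 1) R)) with hA
    set B := Matrix.reindex finSumFinEquiv finSumFinEquiv
        (Matrix.fromBlocks (1 : Matrix (Fin (n + 1)) (Fin (n + 1)) R)
          (Matrix.of fun (i : Fin (n + 1)) (_ : Fin 1) =>
            -((Umat (n + 1) t)⁻¹ i.castSucc (Fin.last (n + 1))))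
          0 (1 : Matrix (Fin 1) (Fin 1) R)) with hB
    have hs1 : ∀ p : Fin (n+1), finSumFinEquiv.symm (Fin.castSucc p) = (Sum.inl p : Fin (n+1) ⊕ Fin 1) :=
      fun p => finSumFinEquiv_symm_apply_castAdd p
    have hs2 : finSumFinEquiv.symm (Fin.last (n+1)) = (Sum.inr 0 : Fin (n+1) ⊕ Fin 1) := by
      rw [Equiv.symm_apply_eq]; rfl
    have hA11 : ∀ p q : Fin (n+1), A p.castSucc q.castSucc = Umat (n+1) t p.castSucc q.castSucc := by
      intro p q
      rw [hA, Matrix.reindex_apply, Matrix.submatrix_apply, hs1, hs1,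
        Matrix.fromBlocks_apply₁₁, umat_restrict]
    have hA12 : ∀ p : Fin (n+1), A p.castSucc (Fin.last (n+1)) = 0 := by
      intro p
      rw [hA, Matrix.reindex_apply, Matrix.submatrix_apply, hs1, hs2, Matrix.fromBlocks_apply₁₂]
      rfl
    have hA21 : ∀ q : Fin (n+1), A (Fin.last (n+1)) q.castSucc = 0 := by
      intro q
      rw [hA, Matrix.reindex_apply, Matrix.submatrix_apply, hs2, hs1, Matrix.fromBlocks_apply₂₁]
      rfl
    have hA22 : A (Fin.last (n+1)) (Fin.last (n+1)) = 1 := by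
      rw [hA, Matrix.reindex_apply, Matrix.submatrix_apply, hs2, Matrix.fromBlocks_apply₂₂,
        Matrix.one_apply_eq]
    have hB11 : ∀ p q : Fin (n+1), B p.castSucc q.castSucc
        = (1 : Matrix (Fin (n+1)) (Fin (n+1)) R) p q := by
      intro p q
      rw [hB, Matrix.reindex_apply, Matrix.submatrix_apply, hs1, hs1, Matrix.fromBlocks_apply₁₁]
    have hB12 : ∀ p : Fin (n+1), B p.castSucc (Fin.last (n+1))
        = -((Umat (n+1) t)⁻¹ p.castSucc (Fin.last (n+1))) := by
      intro p
      rw [hB, Matrix.reindex_apply, Matrix.submatrix_apply, hs1, hs2, Matrix.fromBlocks_apply₁₂]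
      rfl
    have hB21 : ∀ q : Fin (n+1), B (Fin.last (n+1)) q.castSucc = 0 := by
      intro q
      rw [hB, Matrix.reindex_apply, Matrix.submatrix_apply, hs2, hs1, Matrix.fromBlocks_apply₂₁]
      rfl
    have hB22 : B (Fin.last (n+1)) (Fin.last (n+1)) = 1 := by
      rw [hB, Matrix.reindex_apply, Matrix.submatrix_apply, hs2, Matrix.fromBlocks_apply₂₂,
        Matrix.one_apply_eq]
    rw [Fin.sum_univ_castSucc]
    refine Fin.lastCases ?_ ?_ b
    · -- b = last
      refine Fin.lastCases ?_ ?_ a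
      · -- a = last
        rw [hA22, hB22, Finset.sum_eq_zero (fun c _ => by rw [hA21, zero_mul]), umat_diag]
        ring
      · intro p
        have hc1 : ∀ c : Fin (n+1), A p.castSucc c.castSucc * B c.castSucc (Fin.last (n+1))
            = -(Umat (n+1) t p.castSucc c.castSucc
                * (Umat (n+1) t)⁻¹ c.castSucc (Fin.last (n+1))) := by
          intro c; rw [hA11, hB12 c]; ring
        rw [hA12, zero_mul, add_zero, Finset.sum_congr rfl (fun c _ => hc1 c),
          Finset.sum_neg_distrib]
        have key := congrFun (congrFun hUV p.castSucc) (Fin.last (n+1))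
        rw [Matrix.mul_apply, Fin.sum_univ_castSucc, umat_inv_last, mul_one,
          Matrix.one_apply_ne (Fin.ne_of_lt (Fin.castSucc_lt_last p))] at key
        linear_combination key
    · intro q
      have hc2 : ∀ c : Fin (n+1), A a c.castSucc * B c.castSucc q.castSucc
          = A a c.castSucc * (1 : Matrix (Fin (n+1)) (Fin (n+1)) R) c q := by
        intro c; rw [hB11 c q]
      rw [hB21, mul_zero, add_zero, Finset.sum_congr rfl (fun c _ => hc2 c)]
      have hsum : (∑ c : Fin (n+1), A a c.castSucc * (1 : Matrix (Fin (n+1)) (Fin (n+1)) R) c q)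
          = A a q.castSucc := by
        rw [Finset.sum_eq_single q]
        · rw [Matrix.one_apply_eq, mul_one]
        · intro c _ hc
          rw [Matrix.one_apply_ne hc, mul_zero]
        · simp
      rw [hsum]
      refine Fin.lastCases ?_ ?_ a
      · rw [hA21 q]
        exact umat_triangular (n+1) t (Fin.castSucc_lt_last q)
      · intro p
        rw [hA11]
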